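/- Let A be a finite dimensional algebra over an algebraically closed field k, and W a finite dimensional k-central A-bimodule. For finitely generated projective A-modules P, an element w ∈ W(P) = Hom_A(P, W ⊗_A P), and any conflation w' → w ⊕ v → v in the bimodule category W-el (i.e. the underlying sequence of projective modules 0 → P → P ⊕ Q → Q → 0 is exact), one has dim Hom_W(w, z) ≤ dim Hom_W(w', z) and dim Hom_W(z, w) ≤ dim Hom_W(z, w') for every object z of W-el. -/

import Mathlib

set_option linter.unusedSectionVars false

noncomputable section

section WEl

variable (k A W : Type) [Field k] [Ring A] [Algebra k A]
  [AddCommGroup W] [Module k W] [Module A W] [Module Aᵐᵒᵖ W]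
  [SMulCommClass A Aᵐᵒᵖ W] [IsScalarTower k A W]

variable (P : Type) [AddCommGroup P] [Module k P] [Module A P] [IsScalarTower k A P]

/-- The defining relations of the tensor product `W ⊗_A P`. -/
def wrel : Submodule k (TensorProduct k W P) :=
  Submodule.span k {x | ∃ (a : A) (v : W) (p : P),
    x = (MulOpposite.op a • v) ⊗ₜ[k] p - v ⊗ₜ[k] (a • p)}

/-- The tensor product `W ⊗_A P` over the (noncommutative) algebra `A`. -/
abbrev WT := TensorProduct k W P ⧸ wrel k A W P

/-- The elementary tensor `v ⊗ p` of `W ⊗_A P`. -/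
def wmk (v : W) (p : P) : WT k A W P := Submodule.Quotient.mk (v ⊗ₜ[k] p)

/-- Left multiplication by `a : A` on `W`, as a `k`-linear map. -/
def smulW (a : A) : W →ₗ[k] W where
  toFun := (a • ·)
  map_add' := smul_add a
  map_smul' c v := by
    simp only [RingHom.id_apply]
    rw [← algebraMap_smul A c v, ← algebraMap_smul A c (a • v), smul_smul, smul_smul,
      Algebra.commutes]

/-- The left `A`-action on `W ⊗_A P` (through the left action on `W`). -/
def tau (a : A) : WT k A W P →ₗ[k] WT k A W P :=
  Submodule.mapQ _ _ (LinearMap.rTensor P (smulW k A W a)) (by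
    rw [wrel, Submodule.span_le]
    rintro x ⟨b, v, p, rfl⟩
    have : (LinearMap.rTensor P (smulW k A W a))
        ((MulOpposite.op b • v) ⊗ₜ[k] p - v ⊗ₜ[k] (b • p))
        = (MulOpposite.op b • (a • v)) ⊗ₜ[k] p - (a • v) ⊗ₜ[k] (b • p) := by
      simp [smulW, smul_comm]
    rw [SetLike.mem_coe, Submodule.mem_comap, this]
    exact Submodule.subset_span ⟨b, a • v, p, rfl⟩)

lemma ksmul_comm {M : Type} [AddCommGroup M] [Module k M] [Module A M]
    [IsScalarTower k A M] (c : k) (a : A) (x : M) : c • a • x = a • c • x := by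
  rw [← algebraMap_smul A c (a • x), ← algebraMap_smul A c x, smul_smul, smul_smul,
    Algebra.commutes]

variable {P}
variable {P' : Type} [AddCommGroup P'] [Module k P'] [Module A P'] [IsScalarTower k A P']

/-- The map `1_W ⊗ α : W ⊗_A P → W ⊗_A P'` induced by an `A`-linear map `α`. -/
def tmap (α : P →ₗ[k] P') (hα : ∀ (a : A) (p : P), α (a • p) = a • α p) :
    WT k A W P →ₗ[k] WT k A W P' :=
  Submodule.mapQ _ _ (LinearMap.lTensor W α) (by
    rw [wrel, Submodule.span_le]
    rintro x ⟨b, v, p, rfl⟩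
    have : (LinearMap.lTensor W α)
        ((MulOpposite.op b • v) ⊗ₜ[k] p - v ⊗ₜ[k] (b • p))
        = (MulOpposite.op b • v) ⊗ₜ[k] (α p) - v ⊗ₜ[k] (b • α p) := by
      simp [hα]
    rw [SetLike.mem_coe, Submodule.mem_comap, this]
    exact Submodule.subset_span ⟨b, v, α p, rfl⟩)

lemma tmap_mk (α : P →ₗ[k] P') (hα : ∀ (a : A) (p : P), α (a • p) = a • α p)
    (v : W) (p : P) : tmap k A W α hα (wmk k A W P v p) = wmk k A W P' v (α p) := by
  simp [tmap, wmk, Submodule.mapQ_apply]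

/-- The space of morphisms `(P, w) → (P', w')` in the bimodule category `W-el`:
`A`-linear maps `α : P → P'` with `(1 ⊗ α) ∘ w = w' ∘ α`. -/
def HomW (w : P →ₗ[k] WT k A W P) (w' : P' →ₗ[k] WT k A W P') :
    Submodule k (P →ₗ[k] P') where
  carrier := {α | ∃ h : ∀ (a : A) (p : P), α (a • p) = a • α p,
    (tmap k A W α h).comp w = w'.comp α}
  add_mem' := by
    rintro α β ⟨hα, cα⟩ ⟨hβ, cβ⟩
    refine ⟨fun a p => by simp [hα, hβ, smul_add], ?_⟩
    have he : ∀ h', tmap k A W (α + β) h' = tmap k A W α hα + tmap k A W β hβ := by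
      intro h'
      apply LinearMap.ext
      intro x
      obtain ⟨y, rfl⟩ := Submodule.Quotient.mk_surjective _ x
      simp [tmap, Submodule.mapQ_apply]
    rw [he]
    ext p
    have h1 := LinearMap.congr_fun cα p
    have h2 := LinearMap.congr_fun cβ p
    simp only [LinearMap.add_apply, LinearMap.comp_apply] at *
    rw [h1, h2, map_add]
  zero_mem' := by
    refine ⟨fun a p => by simp, ?_⟩
    have he : ∀ h', tmap k A W (0 : P →ₗ[k] P') h' = 0 := by
      intro h'
      apply LinearMap.ext
      intro x
      obtain ⟨y, rfl⟩ := Submodule.Quotient.mk_surjective _ x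
      simp [tmap, Submodule.mapQ_apply]
    rw [he]
    ext p; simp
  smul_mem' := by
    rintro c α ⟨hα, cα⟩
    refine ⟨fun a p => by simp only [LinearMap.smul_apply, hα]; rw [ksmul_comm k A], ?_⟩
    have he : ∀ h', tmap k A W (c • α) h' = c • tmap k A W α hα := by
      intro h'
      apply LinearMap.ext
      intro x
      obtain ⟨y, rfl⟩ := Submodule.Quotient.mk_surjective _ x
      simp [tmap, Submodule.mapQ_apply]
    rw [he]
    ext p
    have h1 := LinearMap.congr_fun cα p
    simp only [LinearMap.smul_apply, LinearMap.comp_apply] at *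
    rw [h1, map_smul]

/-- `w` is an element of the bimodule `W` over `P`, i.e. `w : P → W ⊗_A P` is `A`-linear. -/
def IsEl (w : P →ₗ[k] WT k A W P) : Prop :=
  ∀ (a : A) (p : P), w (a • p) = tau k A W P a (w p)

variable {Q : Type} [AddCommGroup Q] [Module k Q] [Module A Q] [IsScalarTower k A Q]

/-- The direct sum `w ⊕ v` of two elements, an element over `P × Q`. -/
def dsumEl (w : P →ₗ[k] WT k A W P) (v : Q →ₗ[k] WT k A W Q) :
    (P × Q) →ₗ[k] WT k A W (P × Q) :=
  (tmap k A W (LinearMap.inl k P Q) (fun a p => by ext <;> simp)).comp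
      (w.comp (LinearMap.fst k P Q))
    + (tmap k A W (LinearMap.inr k P Q) (fun a q => by ext <;> simp)).comp
      (v.comp (LinearMap.snd k P Q))

end WEl

/-!
As `Q` is projective, the conflation splits as a sequence of `A`-modules: `β` has an `A`-linear
section `σ` and `α` an `A`-linear retraction `ρ`. Hence `Hom_W(-, z)` and `Hom_W(z, -)` are left
exact on it: a morphism `μ : w ⊕ v → z` with `μ α = 0` factors as `(μ σ) β`, and a morphism
`μ : z → w ⊕ v` with `β μ = 0` as `α (ρ μ)`, where `ρ μ` is a morphism because `1 ⊗ α` is injective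
(with left inverse `1 ⊗ ρ`). Counting dimensions along these sequences, with
`Hom_W(w ⊕ v, z) ≅ Hom_W(w, z) × Hom_W(v, z)` and `Hom_W(z, w ⊕ v) ≅ Hom_W(z, w) × Hom_W(z, v)`,
gives both inequalities.
-/

theorem LinearMap.finrank_le_finrank_add_finrank_of_ker_le_range {K X Y Z : Type} [DivisionRing K]
    [AddCommGroup X] [Module K X] [AddCommGroup Y] [Module K Y] [AddCommGroup Z] [Module K Z]
    [FiniteDimensional K X] [FiniteDimensional K Y] [FiniteDimensional K Z]
    (f : X →ₗ[K] Y) (g : Y →ₗ[K] Z) (h : LinearMap.ker g ≤ LinearMap.range f) :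
    Module.finrank K Y ≤ Module.finrank K X + Module.finrank K Z := by
  have := g.finrank_range_add_finrank_ker
  have := Submodule.finrank_mono h
  have := f.finrank_range_le
  have := (LinearMap.range g).finrank_le
  omega

theorem Function.Exact.exists_retraction_of_projective {R M N P : Type} [Ring R]
    [AddCommGroup M] [Module R M] [AddCommGroup N] [Module R N] [AddCommGroup P] [Module R P]
    [Module.Projective R P] {f : M →ₗ[R] N} {g : N →ₗ[R] P} (h : Function.Exact f g)
    (hf : Function.Injective f) (hg : Function.Surjective g) :
    ∃ ρ : N →ₗ[R] M, ρ ∘ₗ f = LinearMap.id :=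
  ((h.split_tfae hf hg).out 0 1).mp (Module.projective_lifting_property g LinearMap.id hg)

section WElMorphisms

variable (k A W : Type) [Field k] [Ring A] [Algebra k A]
  [AddCommGroup W] [Module k W] [Module A W] [Module Aᵐᵒᵖ W]
  [SMulCommClass A Aᵐᵒᵖ W] [IsScalarTower k A W]

section Tmap

variable {P P' P'' : Type}
  [AddCommGroup P] [Module k P] [Module A P] [IsScalarTower k A P]
  [AddCommGroup P'] [Module k P'] [Module A P'] [IsScalarTower k A P']
  [AddCommGroup P''] [Module k P''] [Module A P''] [IsScalarTower k A P'']

theorem WT.hom_ext {M : Type} [AddCommGroup M] [Module k M] {f g : WT k A W P →ₗ[k] M}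
    (h : ∀ v p, f (wmk k A W P v p) = g (wmk k A W P v p)) : f = g :=
  Submodule.linearMap_qext _ (TensorProduct.ext' h)

theorem tmap_comp_tmap {α : P →ₗ[k] P'} {β : P' →ₗ[k] P''} {γ : P →ₗ[k] P''}
    (hα : ∀ (a : A) (p : P), α (a • p) = a • α p)
    (hβ : ∀ (a : A) (p : P'), β (a • p) = a • β p)
    (hγ : ∀ (a : A) (p : P), γ (a • p) = a • γ p) (h : β ∘ₗ α = γ) :
    tmap k A W β hβ ∘ₗ tmap k A W α hα = tmap k A W γ hγ :=
  WT.hom_ext k A W fun v p => by simp [tmap_mk, ← h]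

theorem tmap_id (h : ∀ (a : A) (p : P), (LinearMap.id : P →ₗ[k] P) (a • p) = a • p) :
    tmap k A W LinearMap.id h = LinearMap.id :=
  WT.hom_ext k A W fun v p => by simp [tmap_mk]

theorem tmap_zero (h : ∀ (a : A) (p : P), (0 : P →ₗ[k] P') (a • p) = a • (0 : P →ₗ[k] P') p) :
    tmap k A W 0 h = 0 :=
  WT.hom_ext k A W fun v p => by rw [tmap_mk]; simp [wmk]

theorem tmap_injective_of_comp_eq_id {α : P →ₗ[k] P'} {ρ : P' →ₗ[k] P}
    (hα : ∀ (a : A) (p : P), α (a • p) = a • α p)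
    (hρ : ∀ (a : A) (p : P'), ρ (a • p) = a • ρ p) (hρα : ρ ∘ₗ α = LinearMap.id) :
    Function.Injective (tmap k A W α hα) :=
  Function.LeftInverse.injective (g := tmap k A W ρ hρ) fun x => by
    rw [← LinearMap.comp_apply, tmap_comp_tmap k A W hα hρ (fun _ _ => rfl) hρα, tmap_id,
      LinearMap.id_apply]

end Tmap

section HomW

variable {P₀ P₁ P₂ P₃ : Type}
  [AddCommGroup P₀] [Module k P₀] [Module A P₀] [IsScalarTower k A P₀]
  [AddCommGroup P₁] [Module k P₁] [Module A P₁] [IsScalarTower k A P₁]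
  [AddCommGroup P₂] [Module k P₂] [Module A P₂] [IsScalarTower k A P₂]
  [AddCommGroup P₃] [Module k P₃] [Module A P₃] [IsScalarTower k A P₃]
  {w₀ : P₀ →ₗ[k] WT k A W P₀} {w₁ : P₁ →ₗ[k] WT k A W P₁}
  {w₂ : P₂ →ₗ[k] WT k A W P₂} {w₃ : P₃ →ₗ[k] WT k A W P₃}

theorem comp_mem_homW {α : P₁ →ₗ[k] P₂} {β : P₂ →ₗ[k] P₃}
    (hα : α ∈ HomW k A W w₁ w₂) (hβ : β ∈ HomW k A W w₂ w₃) :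
    β ∘ₗ α ∈ HomW k A W w₁ w₃ := by
  obtain ⟨hα, cα⟩ := hα
  obtain ⟨hβ, cβ⟩ := hβ
  have hβα : ∀ (a : A) (p : P₁), (β ∘ₗ α) (a • p) = a • (β ∘ₗ α) p := by
    simp [hα, hβ]
  refine ⟨hβα, ?_⟩
  rw [← tmap_comp_tmap k A W hα hβ hβα rfl, LinearMap.comp_assoc, cα,
    ← LinearMap.comp_assoc, cβ, LinearMap.comp_assoc]

theorem mem_homW_of_comp_mem_of_surjective {β : P₁ →ₗ[k] P₂} {ν : P₂ →ₗ[k] P₃}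
    (hβ : β ∈ HomW k A W w₁ w₂) (hβ_surj : Function.Surjective β)
    (hν : ∀ (a : A) (p : P₂), ν (a • p) = a • ν p) (hνβ : ν ∘ₗ β ∈ HomW k A W w₁ w₃) :
    ν ∈ HomW k A W w₂ w₃ := by
  obtain ⟨hβ, cβ⟩ := hβ
  obtain ⟨hνβ, cνβ⟩ := hνβ
  refine ⟨hν, (LinearMap.cancel_right hβ_surj).mp ?_⟩
  rw [LinearMap.comp_assoc, ← cβ, ← LinearMap.comp_assoc, tmap_comp_tmap k A W hβ hν hνβ rfl,
    cνβ, LinearMap.comp_assoc]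

theorem mem_homW_of_comp_mem_of_injective {α : P₁ →ₗ[k] P₂} {ν : P₀ →ₗ[k] P₁}
    (hα : α ∈ HomW k A W w₁ w₂) (hα_inj : Function.Injective (tmap k A W α hα.1))
    (hν : ∀ (a : A) (p : P₀), ν (a • p) = a • ν p) (hαν : α ∘ₗ ν ∈ HomW k A W w₀ w₂) :
    ν ∈ HomW k A W w₀ w₁ := by
  obtain ⟨hαν, cαν⟩ := hαν
  refine ⟨hν, (LinearMap.cancel_left hα_inj).mp ?_⟩
  rw [← LinearMap.comp_assoc, tmap_comp_tmap k A W hν hα.1 hαν rfl, cαν,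
    ← LinearMap.comp_assoc, ← hα.2, LinearMap.comp_assoc]

variable (w₃) in
def HomW.precomp {α : P₁ →ₗ[k] P₂} (hα : α ∈ HomW k A W w₁ w₂) :
    HomW k A W w₂ w₃ →ₗ[k] HomW k A W w₁ w₃ :=
  (LinearMap.lcomp k P₃ α).restrict fun _ hμ => comp_mem_homW k A W hα hμ

variable (w₁) in
def HomW.postcomp {β : P₂ →ₗ[k] P₃} (hβ : β ∈ HomW k A W w₂ w₃) :
    HomW k A W w₁ w₂ →ₗ[k] HomW k A W w₁ w₃ :=
  (LinearMap.compRight k β).restrict fun _ hμ => comp_mem_homW k A W hμ hβ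

@[simp]
theorem HomW.coe_precomp {α : P₁ →ₗ[k] P₂} (hα : α ∈ HomW k A W w₁ w₂)
    (μ : HomW k A W w₂ w₃) : (HomW.precomp k A W w₃ hα μ : P₁ →ₗ[k] P₃) = μ ∘ₗ α :=
  rfl

@[simp]
theorem HomW.coe_postcomp {β : P₂ →ₗ[k] P₃} (hβ : β ∈ HomW k A W w₂ w₃)
    (μ : HomW k A W w₁ w₂) : (HomW.postcomp k A W w₁ hβ μ : P₁ →ₗ[k] P₃) = β ∘ₗ μ :=
  rfl

instance [FiniteDimensional k A] [Module.Finite A P₁] [Module.Finite A P₂] :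
    FiniteDimensional k (HomW k A W w₁ w₂) :=
  haveI := Module.Finite.trans (R := k) A P₁
  haveI := Module.Finite.trans (R := k) A P₂
  inferInstance

variable (w₀) in
theorem HomW.ker_precomp_le_range_precomp {α : P₁ →ₗ[k] P₂} {β : P₂ →ₗ[k] P₃}
    (hα : α ∈ HomW k A W w₁ w₂) (hβ : β ∈ HomW k A W w₂ w₃)
    (hexact : LinearMap.ker β ≤ LinearMap.range α) {σ : P₃ →ₗ[k] P₂}
    (hσ : ∀ (a : A) (q : P₃), σ (a • q) = a • σ q) (hβσ : β ∘ₗ σ = LinearMap.id) :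
    LinearMap.ker (HomW.precomp k A W w₀ hα) ≤ LinearMap.range (HomW.precomp k A W w₀ hβ) := by
  intro μ hμ
  have hμα : (μ : P₂ →ₗ[k] P₀) ∘ₗ α = 0 := congrArg Subtype.val hμ
  have hfactor : ((μ : P₂ →ₗ[k] P₀) ∘ₗ σ) ∘ₗ β = μ := LinearMap.ext fun x => by
    obtain ⟨p, hp⟩ := hexact (show x - σ (β x) ∈ LinearMap.ker β by
      simp [← LinearMap.comp_apply β σ, hβσ])
    have := LinearMap.congr_fun hμα p
    simp only [LinearMap.comp_apply, hp, map_sub, LinearMap.zero_apply, sub_eq_zero] at this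
    exact this.symm
  have hμσ : ∀ (a : A) (q : P₃), ((μ : P₂ →ₗ[k] P₀) ∘ₗ σ) (a • q) = a • (μ ∘ₗ σ) q := by
    simp [hσ, μ.2.1]
  have hβ_surj : Function.Surjective β := fun q => ⟨σ q, LinearMap.congr_fun hβσ q⟩
  exact ⟨⟨_, mem_homW_of_comp_mem_of_surjective k A W hβ hβ_surj hμσ (hfactor.symm ▸ μ.2)⟩,
    Subtype.ext hfactor⟩

variable (w₀) in
theorem HomW.ker_postcomp_le_range_postcomp {α : P₁ →ₗ[k] P₂} {β : P₂ →ₗ[k] P₃}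
    (hα : α ∈ HomW k A W w₁ w₂) (hβ : β ∈ HomW k A W w₂ w₃)
    (hexact : LinearMap.ker β ≤ LinearMap.range α) {ρ : P₂ →ₗ[k] P₁}
    (hρ : ∀ (a : A) (p : P₂), ρ (a • p) = a • ρ p) (hρα : ρ ∘ₗ α = LinearMap.id) :
    LinearMap.ker (HomW.postcomp k A W w₀ hβ) ≤ LinearMap.range (HomW.postcomp k A W w₀ hα) := by
  intro μ hμ
  have hβμ : β ∘ₗ (μ : P₀ →ₗ[k] P₂) = 0 := congrArg Subtype.val hμ
  have hfactor : α ∘ₗ (ρ ∘ₗ (μ : P₀ →ₗ[k] P₂)) = μ := LinearMap.ext fun t => by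
    obtain ⟨p, hp⟩ := hexact (LinearMap.congr_fun hβμ t)
    simp [← hp, ← LinearMap.comp_apply ρ α, hρα]
  have hρμ : ∀ (a : A) (t : P₀), (ρ ∘ₗ (μ : P₀ →ₗ[k] P₂)) (a • t) = a • (ρ ∘ₗ μ) t := by
    simp [hρ, μ.2.1]
  exact ⟨⟨_, mem_homW_of_comp_mem_of_injective k A W hα
    (tmap_injective_of_comp_eq_id k A W hα.1 hρ hρα) hρμ (hfactor.symm ▸ μ.2)⟩, Subtype.ext hfactor⟩

end HomW

section Biproduct

variable {P Q Z : Type}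
  [AddCommGroup P] [Module k P] [Module A P] [IsScalarTower k A P]
  [AddCommGroup Q] [Module k Q] [Module A Q] [IsScalarTower k A Q]
  [AddCommGroup Z] [Module k Z] [Module A Z] [IsScalarTower k A Z]
  (w : P →ₗ[k] WT k A W P) (v : Q →ₗ[k] WT k A W Q) (z : Z →ₗ[k] WT k A W Z)

theorem inl_mem_homW : LinearMap.inl k P Q ∈ HomW k A W w (dsumEl k A W w v) :=
  ⟨fun a p => by ext <;> simp, LinearMap.ext fun p => by simp [dsumEl]⟩

theorem inr_mem_homW : LinearMap.inr k P Q ∈ HomW k A W v (dsumEl k A W w v) :=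
  ⟨fun a q => by ext <;> simp, LinearMap.ext fun q => by simp [dsumEl]⟩

theorem fst_mem_homW : LinearMap.fst k P Q ∈ HomW k A W (dsumEl k A W w v) w := by
  refine ⟨fun _ _ => rfl, LinearMap.ext fun x => ?_⟩
  have hinl := LinearMap.congr_fun (tmap_comp_tmap k A W (α := LinearMap.inl k P Q)
    (β := LinearMap.fst k P Q) (γ := LinearMap.id)
    (fun a p => by ext <;> simp) (fun _ _ => rfl) (fun _ _ => rfl) rfl) (w x.1)
  have hinr := LinearMap.congr_fun (tmap_comp_tmap k A W (α := LinearMap.inr k P Q)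
    (β := LinearMap.fst k P Q) (γ := 0)
    (fun a q => by ext <;> simp) (fun _ _ => rfl) (fun _ _ => by simp) rfl) (v x.2)
  simp_all [dsumEl, tmap_id, tmap_zero]

theorem snd_mem_homW : LinearMap.snd k P Q ∈ HomW k A W (dsumEl k A W w v) v := by
  refine ⟨fun _ _ => rfl, LinearMap.ext fun x => ?_⟩
  have hinl := LinearMap.congr_fun (tmap_comp_tmap k A W (α := LinearMap.inl k P Q)
    (β := LinearMap.snd k P Q) (γ := 0)
    (fun a p => by ext <;> simp) (fun _ _ => rfl) (fun _ _ => by simp) rfl) (w x.1)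
  have hinr := LinearMap.congr_fun (tmap_comp_tmap k A W (α := LinearMap.inr k P Q)
    (β := LinearMap.snd k P Q) (γ := LinearMap.id)
    (fun a q => by ext <;> simp) (fun _ _ => rfl) (fun _ _ => rfl) rfl) (v x.2)
  simp_all [dsumEl, tmap_id, tmap_zero]

def HomW.coprodEquiv :
    (HomW k A W w z × HomW k A W v z) ≃ₗ[k] HomW k A W (dsumEl k A W w v) z :=
  LinearEquiv.ofLinearMap
    ((HomW.precomp k A W z (fst_mem_homW k A W w v)).coprod
      (HomW.precomp k A W z (snd_mem_homW k A W w v)))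
    ((HomW.precomp k A W z (inl_mem_homW k A W w v)).prod
      (HomW.precomp k A W z (inr_mem_homW k A W w v)))
    (LinearMap.ext fun μ => Subtype.ext <| LinearMap.ext fun x => by simp [← map_add])
    (LinearMap.ext fun φ => Prod.ext (Subtype.ext <| LinearMap.ext fun p => by simp)
      (Subtype.ext <| LinearMap.ext fun q => by simp))

def HomW.prodEquiv :
    (HomW k A W z w × HomW k A W z v) ≃ₗ[k] HomW k A W z (dsumEl k A W w v) :=
  LinearEquiv.ofLinearMap
    ((HomW.postcomp k A W z (inl_mem_homW k A W w v)).coprod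
      (HomW.postcomp k A W z (inr_mem_homW k A W w v)))
    ((HomW.postcomp k A W z (fst_mem_homW k A W w v)).prod
      (HomW.postcomp k A W z (snd_mem_homW k A W w v)))
    (LinearMap.ext fun μ => Subtype.ext <| LinearMap.ext fun t => by simp)
    (LinearMap.ext fun φ => Prod.ext (Subtype.ext <| LinearMap.ext fun t => by simp)
      (Subtype.ext <| LinearMap.ext fun t => by simp))

end Biproduct

end WElMorphisms

theorem stmt4_general
    (k A W : Type) [Field k] [Ring A] [Algebra k A] [FiniteDimensional k A]
    [AddCommGroup W] [Module k W] [Module A W] [Module Aᵐᵒᵖ W]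
    [SMulCommClass A Aᵐᵒᵖ W] [IsScalarTower k A W]
    (P P' Q : Type)
    [AddCommGroup P] [Module k P] [Module A P] [IsScalarTower k A P]
    [AddCommGroup P'] [Module k P'] [Module A P'] [IsScalarTower k A P']
    [AddCommGroup Q] [Module k Q] [Module A Q] [IsScalarTower k A Q]
    (hPfg : Module.Finite A P)
    (hP'fg : Module.Finite A P')
    (hQfg : Module.Finite A Q) (hQproj : Module.Projective A Q)
    (w : P →ₗ[k] WT k A W P)
    (w' : P' →ₗ[k] WT k A W P')
    (v : Q →ₗ[k] WT k A W Q)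
    (α : P' →ₗ[k] P × Q) (hα : α ∈ HomW k A W w' (dsumEl k A W w v))
    (β : (P × Q) →ₗ[k] Q) (hβ : β ∈ HomW k A W (dsumEl k A W w v) v)
    (hainj : Function.Injective α) (hbsurj : Function.Surjective β)
    (hexact : LinearMap.range α = LinearMap.ker β) :
    ∀ (Z : Type) [AddCommGroup Z] [Module k Z] [Module A Z] [IsScalarTower k A Z],
      Module.Finite A Z → Module.Projective A Z →
      ∀ (z : Z →ₗ[k] WT k A W Z), IsEl k A W z →
        Module.finrank k (HomW k A W w z) ≤ Module.finrank k (HomW k A W w' z) ∧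
        Module.finrank k (HomW k A W z w) ≤ Module.finrank k (HomW k A W z w') := by
  intro Z _ _ _ _ hZfg _ z _
  have := hPfg; have := hP'fg; have := hQfg; have := hQproj; have := hZfg
  let αA : P' →ₗ[A] P × Q := { α with map_smul' := hα.1 }
  let βA : P × Q →ₗ[A] Q := { β with map_smul' := hβ.1 }
  have hexactA : Function.Exact αA βA := fun x => (SetLike.ext_iff.mp hexact x).symm
  obtain ⟨σ, hβσ⟩ := Module.projective_lifting_property βA LinearMap.id hbsurj
  obtain ⟨ρ, hρα⟩ := hexactA.exists_retraction_of_projective hainj hbsurj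
  constructor
  · have hexactHom := HomW.ker_precomp_le_range_precomp k A W z hα hβ hexact.ge
      (σ := σ.restrictScalars k) σ.map_smul (LinearMap.ext fun q => LinearMap.congr_fun hβσ q)
    have hdim := LinearMap.finrank_le_finrank_add_finrank_of_ker_le_range
      (HomW.precomp k A W z hβ) (HomW.precomp k A W z hα) hexactHom
    rw [← (HomW.coprodEquiv k A W w v z).finrank_eq, Module.finrank_prod] at hdim
    omega
  · have hexactHom := HomW.ker_postcomp_le_range_postcomp k A W z hα hβ hexact.ge
      (ρ := ρ.restrictScalars k) ρ.map_smul (LinearMap.ext fun p => LinearMap.congr_fun hρα p)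
    have hdim := LinearMap.finrank_le_finrank_add_finrank_of_ker_le_range
      (HomW.postcomp k A W z hα) (HomW.postcomp k A W z hβ) hexactHom
    rw [← (HomW.prodEquiv k A W w v z).finrank_eq, Module.finrank_prod] at hdim
    omega

/-- in the bimodule category `W-el` of a finite dimensional `k`-central
bimodule `W` over a finite dimensional algebra `A` (`k` algebraically closed), a conflation
`w' → w ⊕ v → v` (underlying exact sequence `0 → P' → P ⊕ Q → Q → 0` of finitely generated
projective modules) forces `dim Hom_W(w, z) ≤ dim Hom_W(w', z)` and
`dim Hom_W(z, w) ≤ dim Hom_W(z, w')` for every object `z` of `W-el`. -/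
theorem stmt4
    (k A W : Type) [Field k] [IsAlgClosed k] [Ring A] [Algebra k A] [FiniteDimensional k A]
    [AddCommGroup W] [Module k W] [Module A W] [Module Aᵐᵒᵖ W]
    [SMulCommClass A Aᵐᵒᵖ W] [IsScalarTower k A W] [FiniteDimensional k W]
    (hcentral : ∀ (c : k) (x : W), MulOpposite.op (algebraMap k A c) • x = c • x)
    (P P' Q : Type)
    [AddCommGroup P] [Module k P] [Module A P] [IsScalarTower k A P]
    [AddCommGroup P'] [Module k P'] [Module A P'] [IsScalarTower k A P']
    [AddCommGroup Q] [Module k Q] [Module A Q] [IsScalarTower k A Q]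
    (hPfg : Module.Finite A P) (hPproj : Module.Projective A P)
    (hP'fg : Module.Finite A P') (hP'proj : Module.Projective A P')
    (hQfg : Module.Finite A Q) (hQproj : Module.Projective A Q)
    (w : P →ₗ[k] WT k A W P) (hw : IsEl k A W w)
    (w' : P' →ₗ[k] WT k A W P') (hw' : IsEl k A W w')
    (v : Q →ₗ[k] WT k A W Q) (hv : IsEl k A W v)
    (α : P' →ₗ[k] P × Q) (hα : α ∈ HomW k A W w' (dsumEl k A W w v))
    (β : (P × Q) →ₗ[k] Q) (hβ : β ∈ HomW k A W (dsumEl k A W w v) v)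
    (hainj : Function.Injective α) (hbsurj : Function.Surjective β)
    (hexact : LinearMap.range α = LinearMap.ker β) :
    ∀ (Z : Type) [AddCommGroup Z] [Module k Z] [Module A Z] [IsScalarTower k A Z],
      Module.Finite A Z → Module.Projective A Z →
      ∀ (z : Z →ₗ[k] WT k A W Z), IsEl k A W z →
        Module.finrank k (HomW k A W w z) ≤ Module.finrank k (HomW k A W w' z) ∧
        Module.finrank k (HomW k A W z w) ≤ Module.finrank k (HomW k A W z w') :=
  stmt4_general k A W P P' Q hPfg hP'fg hQfg hQproj w w' v α hα β hβ hainj hbsurj hexact
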